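/- arXiv:2303.07411 — 2 statements merged into one kernel-verified Lean document; each statement's English description precedes it below -/
import Mathlib

section
/- Let u, v : ℝ³ → ℝ be a smooth solution of iMHD (G1 = 0 and G2 = 0 everywhere), and let ψ₁, ψ₂ : ℝ³ → ℝ be smooth functions satisfying the cotangent system of iMHD: Δ(ψ₁,t − J(u, ψ₁)) + J(v, ψ₂) + J(Δu, ψ₁) = 0 and −Δ(J(v, ψ₁)) − ψ₂,t + J(u, ψ₂) + J(Δv, ψ₁) = 0 at every point. Then the pair φ₁ := ψ₁,t − J(u, ψ₁), φ₂ := −J(v, ψ₁) satisfies the linearized (tangent) system of iMHD: (Δφ₁)_t − J(φ₁, Δu) − J(u, Δφ₁) + J(φ₂, Δv) + J(v, Δφ₂) = 0 and φ₂,t − J(φ₁, v) − J(u, φ₂) = 0 at every point. -/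
noncomputable section

/-- Partial derivative in `t` of a function of `(t, x, y)`. -/
def pt3 (f : ℝ × ℝ × ℝ → ℝ) (P : ℝ × ℝ × ℝ) : ℝ :=
  deriv (fun w => f (w, P.2.1, P.2.2)) P.1

/-- Partial derivative in `x` of a function of `(t, x, y)`. -/
def px3 (f : ℝ × ℝ × ℝ → ℝ) (P : ℝ × ℝ × ℝ) : ℝ :=
  deriv (fun w => f (P.1, w, P.2.2)) P.2.1

/-- Partial derivative in `y` of a function of `(t, x, y)`. -/
def py3 (f : ℝ × ℝ × ℝ → ℝ) (P : ℝ × ℝ × ℝ) : ℝ :=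
  deriv (fun w => f (P.1, P.2.1, w)) P.2.2

/-- Jacobi bracket `J(f, g) = f_x g_y - f_y g_x`. -/
def J3 (f g : ℝ × ℝ × ℝ → ℝ) : ℝ × ℝ × ℝ → ℝ :=
  fun P => px3 f P * py3 g P - py3 f P * px3 g P

/-- Planar Laplacian `Δf = f_xx + f_yy`. -/
def lap3 (f : ℝ × ℝ × ℝ → ℝ) : ℝ × ℝ × ℝ → ℝ :=
  fun P => px3 (px3 f) P + py3 (py3 f) P

/-- The operator `E(f) = x f_x + y f_y - 2 f`. -/
def Eop3 (f : ℝ × ℝ × ℝ → ℝ) : ℝ × ℝ × ℝ → ℝ :=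
  fun P => P.2.1 * px3 f P + P.2.2 * py3 f P - 2 * f P

/-- `G1 = (Δu)_t - J(u, Δu) + J(v, Δv)`. -/
def G1 (u v : ℝ × ℝ × ℝ → ℝ) : ℝ × ℝ × ℝ → ℝ :=
  fun P => pt3 (lap3 u) P - J3 u (lap3 u) P + J3 v (lap3 v) P

/-- `G2 = v_t - J(u, v)`. -/
def G2 (u v : ℝ × ℝ × ℝ → ℝ) : ℝ × ℝ × ℝ → ℝ :=
  fun P => pt3 v P - J3 u v P

/-! ### Auxiliary development: directional derivatives -/

def et3 : ℝ × ℝ × ℝ := (1, 0, 0)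
def ex3 : ℝ × ℝ × ℝ := (0, 1, 0)
def ey3 : ℝ × ℝ × ℝ := (0, 0, 1)

/-- Directional derivative operator. -/
def Dv (a : ℝ × ℝ × ℝ) (f : ℝ × ℝ × ℝ → ℝ) : ℝ × ℝ × ℝ → ℝ :=
  fun P => fderiv ℝ f P a

section DvLemmas

variable {f g h : ℝ × ℝ × ℝ → ℝ} {P : ℝ × ℝ × ℝ}

lemma Dv_smooth (hf : ContDiff ℝ (⊤ : ℕ∞) f) (a : ℝ × ℝ × ℝ) : ContDiff ℝ (⊤ : ℕ∞) (Dv a f) :=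
  (hf.fderiv_right (by simp)).clm_apply contDiff_const

lemma Dv_add (a : ℝ × ℝ × ℝ) (hf : ContDiff ℝ (⊤ : ℕ∞) f) (hg : ContDiff ℝ (⊤ : ℕ∞) g) :
    Dv a (fun Q => f Q + g Q) = fun P => Dv a f P + Dv a g P := by
  funext P
  simp only [Dv]
  rw [fderiv_fun_add (hf.differentiable (by simp) P) (hg.differentiable (by simp) P)]
  rfl

lemma Dv_sub (a : ℝ × ℝ × ℝ) (hf : ContDiff ℝ (⊤ : ℕ∞) f) (hg : ContDiff ℝ (⊤ : ℕ∞) g) :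
    Dv a (fun Q => f Q - g Q) = fun P => Dv a f P - Dv a g P := by
  funext P
  simp only [Dv]
  rw [fderiv_fun_sub (hf.differentiable (by simp) P) (hg.differentiable (by simp) P)]
  rfl

lemma Dv_neg {a : ℝ × ℝ × ℝ} : Dv a (fun Q => -(g Q)) = fun P => -(Dv a g P) := by
  funext P
  simp only [Dv]
  rw [fderiv_fun_neg]
  rfl

lemma Dv_mul (a : ℝ × ℝ × ℝ) (hf : ContDiff ℝ (⊤ : ℕ∞) f) (hg : ContDiff ℝ (⊤ : ℕ∞) g) :
    Dv a (fun Q => f Q * g Q) = fun P => f P * Dv a g P + g P * Dv a f P := by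
  funext P
  simp only [Dv]
  rw [fderiv_fun_mul (hf.differentiable (by simp) P) (hg.differentiable (by simp) P)]
  simp

lemma Dv_comm (hf : ContDiff ℝ (⊤ : ℕ∞) f) (a b : ℝ × ℝ × ℝ) :
    Dv a (Dv b f) = Dv b (Dv a f) := by
  funext P
  have hd : ∀ Q, HasFDerivAt f (fderiv ℝ f Q) Q :=
    fun Q => (hf.differentiable (by simp) Q).hasFDerivAt
  have hd2 : HasFDerivAt (fderiv ℝ f) (fderiv ℝ (fderiv ℝ f) P) P :=
    (((hf.fderiv_right (m := (⊤ : ℕ∞)) (by simp)).differentiable (by simp)) P).hasFDerivAt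
  have hsymm := second_derivative_symmetric hd hd2
  have key : ∀ c : ℝ × ℝ × ℝ, ∀ d : ℝ × ℝ × ℝ,
      Dv c (Dv d f) P = fderiv ℝ (fderiv ℝ f) P c d := by
    intro c d
    have h1 : Dv d f = fun Q => (ContinuousLinearMap.apply ℝ ℝ d) (fderiv ℝ f Q) := rfl
    have h2 : HasFDerivAt (Dv d f)
        ((ContinuousLinearMap.apply ℝ ℝ d).comp (fderiv ℝ (fderiv ℝ f) P)) P := by
      rw [h1]
      exact (ContinuousLinearMap.apply ℝ ℝ d).hasFDerivAt.comp P hd2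
    simp only [Dv, h2.fderiv]
    rfl
  rw [key a b, key b a, hsymm]

/-! ### D-world bracket and Laplacian -/

end DvLemmas

def Jd (f g : ℝ × ℝ × ℝ → ℝ) : ℝ × ℝ × ℝ → ℝ :=
  fun P => Dv ex3 f P * Dv ey3 g P - Dv ey3 f P * Dv ex3 g P

def lapd (f : ℝ × ℝ × ℝ → ℝ) : ℝ × ℝ × ℝ → ℝ :=
  fun P => Dv ex3 (Dv ex3 f) P + Dv ey3 (Dv ey3 f) P

section JdLemmas

variable {f g h : ℝ × ℝ × ℝ → ℝ} {P : ℝ × ℝ × ℝ}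

lemma Jd_smooth (hf : ContDiff ℝ (⊤ : ℕ∞) f) (hg : ContDiff ℝ (⊤ : ℕ∞) g) : ContDiff ℝ (⊤ : ℕ∞) (Jd f g) :=
  ((Dv_smooth hf ex3).mul (Dv_smooth hg ey3)).sub ((Dv_smooth hf ey3).mul (Dv_smooth hg ex3))

lemma lapd_smooth (hf : ContDiff ℝ (⊤ : ℕ∞) f) : ContDiff ℝ (⊤ : ℕ∞) (lapd f) :=
  (Dv_smooth (Dv_smooth hf ex3) ex3).add (Dv_smooth (Dv_smooth hf ey3) ey3)

lemma Jd_swap' (f g : ℝ × ℝ × ℝ → ℝ) : Jd f g = fun P => -(Jd g f P) := by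
  funext P; simp only [Jd]; ring

lemma Jd_swap (f g : ℝ × ℝ × ℝ → ℝ) (P : ℝ × ℝ × ℝ) : Jd f g P = -(Jd g f P) := by
  simp only [Jd]; ring

lemma Jd_sub_left (hf : ContDiff ℝ (⊤ : ℕ∞) f) (hg : ContDiff ℝ (⊤ : ℕ∞) g) :
    Jd (fun Q => f Q - g Q) h = fun P => Jd f h P - Jd g h P := by
  funext P
  simp only [Jd, Dv_sub ex3 hf hg, Dv_sub ey3 hf hg]
  ring

lemma Jd_neg_left : Jd (fun Q => -(g Q)) h = fun P => -(Jd g h P) := by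
  funext P
  simp only [Jd, Dv_neg]
  ring

lemma Jd_add_right (hg : ContDiff ℝ (⊤ : ℕ∞) g) (hh : ContDiff ℝ (⊤ : ℕ∞) h) :
    Jd f (fun Q => g Q + h Q) = fun P => Jd f g P + Jd f h P := by
  funext P
  simp only [Jd, Dv_add ex3 hg hh, Dv_add ey3 hg hh]
  ring

lemma Jd_sub_right (hg : ContDiff ℝ (⊤ : ℕ∞) g) (hh : ContDiff ℝ (⊤ : ℕ∞) h) :
    Jd f (fun Q => g Q - h Q) = fun P => Jd f g P - Jd f h P := by
  funext P
  simp only [Jd, Dv_sub ex3 hg hh, Dv_sub ey3 hg hh]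
  ring

lemma Jd_neg_right : Jd f (fun Q => -(g Q)) = fun P => -(Jd f g P) := by
  funext P
  simp only [Jd, Dv_neg]
  ring

lemma Jd_swap2 (f g h : ℝ × ℝ × ℝ → ℝ) (P : ℝ × ℝ × ℝ) :
    Jd (Jd f g) h P = -(Jd (Jd g f) h P) := by
  rw [Jd_swap' f g, Jd_neg_left]

lemma lapd_neg : lapd (fun Q => -(g Q)) = fun P => -(lapd g P) := by
  funext P
  simp only [lapd, Dv_neg]
  ring

lemma Dv_Jd (a : ℝ × ℝ × ℝ) (hf : ContDiff ℝ (⊤ : ℕ∞) f) (hg : ContDiff ℝ (⊤ : ℕ∞) g) :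
    Dv a (Jd f g) = fun P => Jd (Dv a f) g P + Jd f (Dv a g) P := by
  have h1 : Jd f g = fun Q => Dv ex3 f Q * Dv ey3 g Q - Dv ey3 f Q * Dv ex3 g Q := rfl
  rw [h1, Dv_sub a ((Dv_smooth hf ex3).mul (Dv_smooth hg ey3))
      ((Dv_smooth hf ey3).mul (Dv_smooth hg ex3)),
    Dv_mul a (Dv_smooth hf ex3) (Dv_smooth hg ey3),
    Dv_mul a (Dv_smooth hf ey3) (Dv_smooth hg ex3),
    Dv_comm hf a ex3, Dv_comm hf a ey3, Dv_comm hg a ex3, Dv_comm hg a ey3]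
  funext P
  simp only [Jd]
  ring

lemma Dv_lapd (a : ℝ × ℝ × ℝ) (hf : ContDiff ℝ (⊤ : ℕ∞) f) :
    Dv a (lapd f) = lapd (Dv a f) := by
  have h1 : lapd f = fun Q => Dv ex3 (Dv ex3 f) Q + Dv ey3 (Dv ey3 f) Q := rfl
  rw [h1, Dv_add a (Dv_smooth (Dv_smooth hf ex3) ex3) (Dv_smooth (Dv_smooth hf ey3) ey3),
    Dv_comm (Dv_smooth hf ex3) a ex3, Dv_comm hf a ex3,
    Dv_comm (Dv_smooth hf ey3) a ey3, Dv_comm hf a ey3]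
  rfl

lemma jacobi (hf : ContDiff ℝ (⊤ : ℕ∞) f) (hg : ContDiff ℝ (⊤ : ℕ∞) g) (hh : ContDiff ℝ (⊤ : ℕ∞) h)
    (P : ℝ × ℝ × ℝ) :
    Jd (Jd f g) h P + Jd (Jd g h) f P + Jd (Jd h f) g P = 0 := by
  have A1 : Jd (Jd f g) h P
      = (Jd (Dv ex3 f) g P + Jd f (Dv ex3 g) P) * Dv ey3 h P
        - (Jd (Dv ey3 f) g P + Jd f (Dv ey3 g) P) * Dv ex3 h P := by
    show Dv ex3 (Jd f g) P * Dv ey3 h P - Dv ey3 (Jd f g) P * Dv ex3 h P = _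
    rw [congrFun (Dv_Jd ex3 hf hg) P, congrFun (Dv_Jd ey3 hf hg) P]
  have A2 : Jd (Jd g h) f P
      = (Jd (Dv ex3 g) h P + Jd g (Dv ex3 h) P) * Dv ey3 f P
        - (Jd (Dv ey3 g) h P + Jd g (Dv ey3 h) P) * Dv ex3 f P := by
    show Dv ex3 (Jd g h) P * Dv ey3 f P - Dv ey3 (Jd g h) P * Dv ex3 f P = _
    rw [congrFun (Dv_Jd ex3 hg hh) P, congrFun (Dv_Jd ey3 hg hh) P]
  have A3 : Jd (Jd h f) g P
      = (Jd (Dv ex3 h) f P + Jd h (Dv ex3 f) P) * Dv ey3 g P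
        - (Jd (Dv ey3 h) f P + Jd h (Dv ey3 f) P) * Dv ex3 g P := by
    show Dv ex3 (Jd h f) P * Dv ey3 g P - Dv ey3 (Jd h f) P * Dv ex3 g P = _
    rw [congrFun (Dv_Jd ex3 hh hf) P, congrFun (Dv_Jd ey3 hh hf) P]
  rw [A1, A2, A3]
  simp only [Jd]
  rw [Dv_comm hf ey3 ex3, Dv_comm hg ey3 ex3, Dv_comm hh ey3 ex3]
  ring

end JdLemmas

/-! ### Conversion lemmas -/

section Conv

variable {f g : ℝ × ℝ × ℝ → ℝ}

lemma pt3_eq (hf : ContDiff ℝ (⊤ : ℕ∞) f) : pt3 f = Dv et3 f := by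
  funext P
  have h1 : HasDerivAt (fun w : ℝ => ((w, P.2.1, P.2.2) : ℝ × ℝ × ℝ))
      ((1 : ℝ), (0 : ℝ), (0 : ℝ)) P.1 :=
    (hasDerivAt_id P.1).prodMk (hasDerivAt_const _ _)
  have h2 : HasFDerivAt f (fderiv ℝ f P) ((P.1, P.2.1, P.2.2) : ℝ × ℝ × ℝ) := by
    simpa using (hf.differentiable (by simp) P).hasFDerivAt
  have := (h2.comp_hasDerivAt P.1 h1).deriv
  simpa [pt3, Dv, et3, Function.comp_def] using this

lemma px3_eq (hf : ContDiff ℝ (⊤ : ℕ∞) f) : px3 f = Dv ex3 f := by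
  funext P
  have h1 : HasDerivAt (fun w : ℝ => ((P.1, w, P.2.2) : ℝ × ℝ × ℝ))
      ((0 : ℝ), (1 : ℝ), (0 : ℝ)) P.2.1 :=
    (hasDerivAt_const _ _).prodMk ((hasDerivAt_id P.2.1).prodMk (hasDerivAt_const _ _))
  have h2 : HasFDerivAt f (fderiv ℝ f P) ((P.1, P.2.1, P.2.2) : ℝ × ℝ × ℝ) := by
    simpa using (hf.differentiable (by simp) P).hasFDerivAt
  have := (h2.comp_hasDerivAt P.2.1 h1).deriv
  simpa [px3, Dv, ex3, Function.comp_def] using this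

lemma py3_eq (hf : ContDiff ℝ (⊤ : ℕ∞) f) : py3 f = Dv ey3 f := by
  funext P
  have h1 : HasDerivAt (fun w : ℝ => ((P.1, P.2.1, w) : ℝ × ℝ × ℝ))
      ((0 : ℝ), (0 : ℝ), (1 : ℝ)) P.2.2 :=
    (hasDerivAt_const _ _).prodMk ((hasDerivAt_const _ _).prodMk (hasDerivAt_id P.2.2))
  have h2 : HasFDerivAt f (fderiv ℝ f P) ((P.1, P.2.1, P.2.2) : ℝ × ℝ × ℝ) := by
    simpa using (hf.differentiable (by simp) P).hasFDerivAt
  have := (h2.comp_hasDerivAt P.2.2 h1).deriv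
  simpa [py3, Dv, ey3, Function.comp_def] using this

lemma J3_eq (hf : ContDiff ℝ (⊤ : ℕ∞) f) (hg : ContDiff ℝ (⊤ : ℕ∞) g) : J3 f g = Jd f g := by
  funext P
  simp only [J3, Jd]
  rw [px3_eq hf, py3_eq hf, px3_eq hg, py3_eq hg]

lemma lap3_eq (hf : ContDiff ℝ (⊤ : ℕ∞) f) : lap3 f = lapd f := by
  funext P
  simp only [lap3, lapd]
  rw [px3_eq hf, py3_eq hf, px3_eq (Dv_smooth hf ex3), py3_eq (Dv_smooth hf ey3)]

end Conv

theorem imhd_cotangent_to_tangent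
    (u v psi1 psi2 : ℝ × ℝ × ℝ → ℝ)
    (hu : ContDiff ℝ (⊤ : ℕ∞) u) (hv : ContDiff ℝ (⊤ : ℕ∞) v)
    (hpsi1 : ContDiff ℝ (⊤ : ℕ∞) psi1) (hpsi2 : ContDiff ℝ (⊤ : ℕ∞) psi2)
    (hG1 : ∀ P, G1 u v P = 0) (hG2 : ∀ P, G2 u v P = 0)
    (hcot1 : ∀ P, lap3 (fun Q => pt3 psi1 Q - J3 u psi1 Q) P + J3 v psi2 P
      + J3 (lap3 u) psi1 P = 0)
    (hcot2 : ∀ P, -lap3 (fun Q => J3 v psi1 Q) P - pt3 psi2 P + J3 u psi2 P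
      + J3 (lap3 v) psi1 P = 0)
    (f1 f2 : ℝ × ℝ × ℝ → ℝ)
    (hf1 : f1 = fun P => pt3 psi1 P - J3 u psi1 P)
    (hf2 : f2 = fun P => -(J3 v psi1 P)) :
    (∀ P, pt3 (lap3 f1) P - J3 f1 (lap3 u) P - J3 u (lap3 f1) P
      + J3 f2 (lap3 v) P + J3 v (lap3 f2) P = 0) ∧
    (∀ P, pt3 f2 P - J3 f1 v P - J3 u f2 P = 0) := by
  subst hf1 hf2
  -- convert the defining lambdas to D-world
  have e1 : (fun P => pt3 psi1 P - J3 u psi1 P)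
      = (fun Q => Dv et3 psi1 Q - Jd u psi1 Q) := by
    funext Q; rw [pt3_eq hpsi1, J3_eq hu hpsi1]
  have e2 : (fun P => -(J3 v psi1 P)) = (fun Q => -(Jd v psi1 Q)) := by
    funext Q; rw [J3_eq hv hpsi1]
  have e2' : (fun Q => J3 v psi1 Q) = Jd v psi1 := by
    funext Q; rw [J3_eq hv hpsi1]
  rw [e1, e2]
  have hF1s : ContDiff ℝ (⊤ : ℕ∞) (fun Q => Dv et3 psi1 Q - Jd u psi1 Q) :=
    (Dv_smooth hpsi1 et3).sub (Jd_smooth hu hpsi1)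
  have hF2s : ContDiff ℝ (⊤ : ℕ∞) (fun Q => -(Jd v psi1 Q)) := (Jd_smooth hv hpsi1).neg
  -- hypotheses in D-world
  have hG2' : Dv et3 v = Jd u v := by
    funext P
    have h := hG2 P
    simp only [G2] at h
    rw [pt3_eq hv, J3_eq hu hv] at h
    linarith
  have hG1' : Dv et3 (lapd u) = fun P => Jd u (lapd u) P - Jd v (lapd v) P := by
    funext P
    have h := hG1 P
    simp only [G1] at h
    rw [lap3_eq hu, lap3_eq hv, pt3_eq (lapd_smooth hu), J3_eq hu (lapd_smooth hu),
      J3_eq hv (lapd_smooth hv)] at h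
    linarith
  have hC1' : lapd (fun Q => Dv et3 psi1 Q - Jd u psi1 Q)
      = fun P => -(Jd v psi2 P) - Jd (lapd u) psi1 P := by
    funext P
    have h := hcot1 P
    rw [e1, lap3_eq hF1s, J3_eq hv hpsi2, lap3_eq hu, J3_eq (lapd_smooth hu) hpsi1] at h
    linarith
  have hC2' : Dv et3 psi2 = fun P => lapd (fun Q => -(Jd v psi1 Q)) P
      + Jd u psi2 P + Jd (lapd v) psi1 P := by
    funext P
    have h := hcot2 P
    rw [e2', lap3_eq (Jd_smooth hv hpsi1), pt3_eq hpsi2, J3_eq hu hpsi2, lap3_eq hv,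
      J3_eq (lapd_smooth hv) hpsi1] at h
    rw [lapd_neg]
    beta_reduce
    linarith
  -- convert the goal to D-world
  rw [lap3_eq hF1s, lap3_eq hF2s, lap3_eq hu, lap3_eq hv,
    pt3_eq (lapd_smooth hF1s), pt3_eq hF2s,
    J3_eq hF1s (lapd_smooth hu), J3_eq hu (lapd_smooth hF1s),
    J3_eq hF2s (lapd_smooth hv), J3_eq hv (lapd_smooth hF2s),
    J3_eq hF1s hv, J3_eq hu hF2s]
  constructor
  · -- tangent equation 1
    intro P
    rw [hC1']
    have E1 : Dv et3 (fun P => -(Jd v psi2 P) - Jd (lapd u) psi1 P) P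
        = -(Dv et3 (Jd v psi2) P) - Dv et3 (Jd (lapd u) psi1) P := by
      rw [Dv_sub et3 ((Jd_smooth hv hpsi2).neg) (Jd_smooth (lapd_smooth hu) hpsi1)]
      simp only [Dv_neg]
    have E2 : Dv et3 (Jd v psi2) P
        = Jd (Jd u v) psi2 P + Jd v (lapd (fun Q => -(Jd v psi1 Q))) P
          + Jd v (Jd u psi2) P + Jd v (Jd (lapd v) psi1) P := by
      have h := congrFun (Dv_Jd et3 hv hpsi2) P
      rw [hG2', hC2'] at h
      rw [Jd_add_right ((lapd_smooth hF2s).add (Jd_smooth hu hpsi2))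
          (Jd_smooth (lapd_smooth hv) hpsi1),
        Jd_add_right (lapd_smooth hF2s) (Jd_smooth hu hpsi2)] at h
      beta_reduce at h
      linarith
    have E3 : Dv et3 (Jd (lapd u) psi1) P
        = Jd (Jd u (lapd u)) psi1 P - Jd (Jd v (lapd v)) psi1 P
          + Jd (lapd u) (Dv et3 psi1) P := by
      have h := congrFun (Dv_Jd et3 (lapd_smooth hu) hpsi1) P
      rw [hG1'] at h
      rw [Jd_sub_left (Jd_smooth hu (lapd_smooth hu)) (Jd_smooth hv (lapd_smooth hv))] at h
      beta_reduce at h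
      linarith
    have E4 : Jd (fun Q => Dv et3 psi1 Q - Jd u psi1 Q) (lapd u) P
        = Jd (Dv et3 psi1) (lapd u) P - Jd (Jd u psi1) (lapd u) P := by
      rw [Jd_sub_left (Dv_smooth hpsi1 et3) (Jd_smooth hu hpsi1)]
    have E5 : Jd u (fun P => -(Jd v psi2 P) - Jd (lapd u) psi1 P) P
        = -(Jd u (Jd v psi2) P) - Jd u (Jd (lapd u) psi1) P := by
      rw [Jd_sub_right ((Jd_smooth hv hpsi2).neg) (Jd_smooth (lapd_smooth hu) hpsi1)]
      simp only [Jd_neg_right]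
    have E6 : Jd (fun Q => -(Jd v psi1 Q)) (lapd v) P
        = -(Jd (Jd v psi1) (lapd v) P) := by
      rw [Jd_neg_left]
    have jacA := jacobi hu hv hpsi2 P
    have jacB := jacobi hv (lapd_smooth hv) hpsi1 P
    have jacC := jacobi hu (lapd_smooth hu) hpsi1 P
    have sw1 := Jd_swap (Jd v psi2) u P
    have sw2 := Jd_swap2 psi2 u v P
    have sw3 := Jd_swap (Jd u psi2) v P
    have sw4 := Jd_swap (Jd (lapd v) psi1) v P
    have sw5 := Jd_swap2 psi1 v (lapd v) P
    have sw6 := Jd_swap (Jd (lapd u) psi1) u P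
    have sw7 := Jd_swap2 psi1 u (lapd u) P
    have sw8 := Jd_swap (lapd u) (Dv et3 psi1) P
    linarith
  · -- tangent equation 2
    intro P
    have a1 : Dv et3 (fun Q => -(Jd v psi1 Q)) P = -(Dv et3 (Jd v psi1) P) := by
      simp only [Dv_neg]
    have a2 : Dv et3 (Jd v psi1) P
        = Jd (Jd u v) psi1 P + Jd v (Dv et3 psi1) P := by
      have h := congrFun (Dv_Jd et3 hv hpsi1) P
      rw [hG2'] at h
      linarith
    have a3 : Jd (fun Q => Dv et3 psi1 Q - Jd u psi1 Q) v P
        = Jd (Dv et3 psi1) v P - Jd (Jd u psi1) v P := by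
      rw [Jd_sub_left (Dv_smooth hpsi1 et3) (Jd_smooth hu hpsi1)]
    have a4 : Jd u (fun Q => -(Jd v psi1 Q)) P = -(Jd u (Jd v psi1) P) := by
      rw [Jd_neg_right]
    have jac := jacobi hu hv hpsi1 P
    have s1 := Jd_swap v (Dv et3 psi1) P
    have s2 := Jd_swap (Jd v psi1) u P
    have s3 := Jd_swap2 psi1 u v P
    linarith
end
end

section
/- Let u, v : ℝ³ → ℝ be a smooth solution of iMHD, and let ψ₁, ψ₂, φ₁, φ₂ : ℝ³ → ℝ be smooth functions satisfying the Bäcklund system: ψ₁,t = J(u, ψ₁) + φ₁, 0 = J(v, ψ₁) + φ₂, ψ₂,t = J(u, ψ₂) + J(Δv, ψ₁) + Δφ₂, and 0 = J(v, ψ₂) + J(Δu, ψ₁) + Δφ₁ at every point. Then (ψ₁, ψ₂) satisfies the cotangent system of iMHD: Δ(ψ₁,t − J(u, ψ₁)) + J(v, ψ₂) + J(Δu, ψ₁) = 0 and −Δ(J(v, ψ₁)) − ψ₂,t + J(u, ψ₂) + J(Δv, ψ₁) = 0, and (φ₁, φ₂) satisfies the linearized (tangent) system of iMHD: (Δφ₁)_t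 − J(φ₁, Δu) − J(u, Δφ₁) + J(φ₂, Δv) + J(v, Δφ₂) = 0 and φ₂,t − J(φ₁, v) − J(u, φ₂) = 0, at every point. Hence this system defines a Bäcklund transformation between the tangent and the cotangent coverings of iMHD. -/
noncomputable section

namespace IMHDaux

def D (w : ℝ × ℝ × ℝ) (f : ℝ × ℝ × ℝ → ℝ) : ℝ × ℝ × ℝ → ℝ := fun P => fderiv ℝ f P w

def et : ℝ × ℝ × ℝ := (1, 0, 0)
def ex : ℝ × ℝ × ℝ := (0, 1, 0)
def ey : ℝ × ℝ × ℝ := (0, 0, 1)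

def Jb (f g : ℝ × ℝ × ℝ → ℝ) : ℝ × ℝ × ℝ → ℝ :=
  fun P => D ex f P * D ey g P - D ey f P * D ex g P

def Lb (f : ℝ × ℝ × ℝ → ℝ) : ℝ × ℝ × ℝ → ℝ :=
  fun P => D ex (D ex f) P + D ey (D ey f) P

lemma Jb_apply (f g : ℝ × ℝ × ℝ → ℝ) (P) :
    Jb f g P = D ex f P * D ey g P - D ey f P * D ex g P := rfl

variable {f g h : ℝ × ℝ × ℝ → ℝ}

lemma contDiff_D (w : ℝ × ℝ × ℝ) (hf : ContDiff ℝ (⊤ : ℕ∞) f) : ContDiff ℝ (⊤ : ℕ∞) (D w f) :=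
  (hf.fderiv_right (by simp)).clm_apply contDiff_const

lemma diff_D (w : ℝ × ℝ × ℝ) (hf : ContDiff ℝ (⊤ : ℕ∞) f) : Differentiable ℝ (D w f) :=
  (contDiff_D w hf).differentiable (by simp)

lemma contDiff_Jb (hf : ContDiff ℝ (⊤ : ℕ∞) f) (hg : ContDiff ℝ (⊤ : ℕ∞) g) : ContDiff ℝ (⊤ : ℕ∞) (Jb f g) :=
  ((contDiff_D ex hf).mul (contDiff_D ey hg)).sub ((contDiff_D ey hf).mul (contDiff_D ex hg))

lemma contDiff_Lb (hf : ContDiff ℝ (⊤ : ℕ∞) f) : ContDiff ℝ (⊤ : ℕ∞) (Lb f) :=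
  (contDiff_D ex (contDiff_D ex hf)).add (contDiff_D ey (contDiff_D ey hf))

lemma D_swap (hf : ContDiff ℝ (⊤ : ℕ∞) f) (v w : ℝ × ℝ × ℝ) (P) :
    D v (D w f) P = D w (D v f) P := by
  have hd : ContDiff ℝ (⊤ : ℕ∞) (fderiv ℝ f) := hf.fderiv_right (by simp)
  have key : ∀ a b : ℝ × ℝ × ℝ, D a (D b f) P = fderiv ℝ (fderiv ℝ f) P a b := by
    intro a b
    show fderiv ℝ (fun Q => fderiv ℝ f Q b) P a = _
    rw [fderiv_clm_apply (hd.differentiable (by simp) P) (differentiableAt_const b)]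
    simp
  rw [key, key]
  exact second_derivative_symmetric (fun y => (hf.differentiable (by simp) y).hasFDerivAt)
    ((hd.differentiable (by simp) P).hasFDerivAt) v w

lemma D_add (hf : Differentiable ℝ f) (hg : Differentiable ℝ g) (w : ℝ × ℝ × ℝ) (P) :
    D w (fun Q => f Q + g Q) P = D w f P + D w g P := by
  show fderiv ℝ (fun Q => f Q + g Q) P w = _
  rw [fderiv_fun_add (hf P) (hg P)]; rfl

lemma D_sub (hf : Differentiable ℝ f) (hg : Differentiable ℝ g) (w : ℝ × ℝ × ℝ) (P) :
    D w (fun Q => f Q - g Q) P = D w f P - D w g P := by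
  show fderiv ℝ (fun Q => f Q - g Q) P w = _
  rw [fderiv_fun_sub (hf P) (hg P)]; rfl

lemma D_neg (w : ℝ × ℝ × ℝ) (g : ℝ × ℝ × ℝ → ℝ) (P) :
    D w (fun Q => -(g Q)) P = -(D w g P) := by
  show fderiv ℝ (fun Q => -(g Q)) P w = _
  rw [fderiv_fun_neg]; rfl

lemma D_mul (hf : Differentiable ℝ f) (hg : Differentiable ℝ g) (w : ℝ × ℝ × ℝ) (P) :
    D w (fun Q => f Q * g Q) P = D w f P * g P + f P * D w g P := by
  show fderiv ℝ (fun Q => f Q * g Q) P w = _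
  rw [fderiv_fun_mul (hf P) (hg P)]
  show f P * fderiv ℝ g P w + g P * fderiv ℝ f P w = _
  simp only [D]; ring

lemma D_Jb (hf : ContDiff ℝ (⊤ : ℕ∞) f) (hg : ContDiff ℝ (⊤ : ℕ∞) g) (w : ℝ × ℝ × ℝ) (P) :
    D w (Jb f g) P = Jb (D w f) g P + Jb f (D w g) P := by
  have e1 : D w (Jb f g) P =
      (D w (D ex f) P * D ey g P + D ex f P * D w (D ey g) P)
      - (D w (D ey f) P * D ex g P + D ey f P * D w (D ex g) P) := by
    show D w (fun Q => D ex f Q * D ey g Q - D ey f Q * D ex g Q) P = _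
    rw [D_sub ((diff_D ex hf).fun_mul (diff_D ey hg)) ((diff_D ey hf).fun_mul (diff_D ex hg)),
      D_mul (diff_D ex hf) (diff_D ey hg), D_mul (diff_D ey hf) (diff_D ex hg)]
  rw [e1, D_swap hf w ex P, D_swap hf w ey P, D_swap hg w ex P, D_swap hg w ey P,
    Jb_apply, Jb_apply]
  ring

lemma Jb_swap (f g : ℝ × ℝ × ℝ → ℝ) (P) : Jb f g P = -(Jb g f P) := by
  simp only [Jb_apply]; ring

lemma Jb_add_right (hg : Differentiable ℝ g) (hh : Differentiable ℝ h)
    (f : ℝ × ℝ × ℝ → ℝ) (P) :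
    Jb f (fun Q => g Q + h Q) P = Jb f g P + Jb f h P := by
  simp only [Jb_apply, D_add hg hh]; ring

lemma Jb_neg_right (f g : ℝ × ℝ × ℝ → ℝ) (P) :
    Jb f (fun Q => -(g Q)) P = -(Jb f g P) := by
  simp only [Jb_apply, D_neg]; ring

lemma Jb_neg_left (f g : ℝ × ℝ × ℝ → ℝ) (P) :
    Jb (fun Q => -(f Q)) g P = -(Jb f g P) := by
  simp only [Jb_apply, D_neg]; ring

lemma Jb_sub_left (hf : Differentiable ℝ f) (hg : Differentiable ℝ g)
    (h : ℝ × ℝ × ℝ → ℝ) (P) :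
    Jb (fun Q => f Q - g Q) h P = Jb f h P - Jb g h P := by
  simp only [Jb_apply, D_sub hf hg]; ring

lemma Jb_negsub_right (hg : Differentiable ℝ g) (hh : Differentiable ℝ h)
    (f : ℝ × ℝ × ℝ → ℝ) (P) :
    Jb f (fun Q => -(g Q) - h Q) P = -(Jb f g P) - Jb f h P := by
  have hng : Differentiable ℝ (fun Q => -(g Q)) := hg.neg
  simp only [Jb_apply, D_sub hng hh, D_neg]; ring

lemma jacobi (hf : ContDiff ℝ (⊤ : ℕ∞) f) (hg : ContDiff ℝ (⊤ : ℕ∞) g) (hh : ContDiff ℝ (⊤ : ℕ∞) h) (P) :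
    Jb f (Jb g h) P = Jb (Jb f g) h P + Jb g (Jb f h) P := by
  rw [Jb_apply f (Jb g h), Jb_apply (Jb f g) h, Jb_apply g (Jb f h),
    D_Jb hg hh ey P, D_Jb hg hh ex P, D_Jb hf hg ey P, D_Jb hf hg ex P,
    D_Jb hf hh ey P, D_Jb hf hh ex P]
  simp only [Jb_apply]
  have sf := D_swap hf ey ex P
  have sg := D_swap hg ey ex P
  have sh := D_swap hh ey ex P
  simp only [sf, sg, sh]
  ring

end IMHDaux

namespace IMHDaux

variable {f g h : ℝ × ℝ × ℝ → ℝ}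

lemma pt3_eq (hf : Differentiable ℝ f) (P : ℝ × ℝ × ℝ) : pt3 f P = D et f P := by
  have hc : HasDerivAt (fun w : ℝ => ((w, P.2.1, P.2.2) : ℝ × ℝ × ℝ)) et P.1 :=
    HasDerivAt.prodMk (hasDerivAt_id P.1) (HasDerivAt.prodMk (hasDerivAt_const P.1 P.2.1) (hasDerivAt_const P.1 P.2.2))
  exact ((hf P).hasFDerivAt.comp_hasDerivAt P.1 hc).deriv

lemma px3_eq (hf : Differentiable ℝ f) (P : ℝ × ℝ × ℝ) : px3 f P = D ex f P := by
  have hc : HasDerivAt (fun w : ℝ => ((P.1, w, P.2.2) : ℝ × ℝ × ℝ)) ex P.2.1 :=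
    HasDerivAt.prodMk (hasDerivAt_const P.2.1 P.1) (HasDerivAt.prodMk (hasDerivAt_id P.2.1) (hasDerivAt_const P.2.1 P.2.2))
  exact ((hf P).hasFDerivAt.comp_hasDerivAt P.2.1 hc).deriv

lemma py3_eq (hf : Differentiable ℝ f) (P : ℝ × ℝ × ℝ) : py3 f P = D ey f P := by
  have hc : HasDerivAt (fun w : ℝ => ((P.1, P.2.1, w) : ℝ × ℝ × ℝ)) ey P.2.2 :=
    HasDerivAt.prodMk (hasDerivAt_const P.2.2 P.1) (HasDerivAt.prodMk (hasDerivAt_const P.2.2 P.2.1) (hasDerivAt_id P.2.2))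
  exact ((hf P).hasFDerivAt.comp_hasDerivAt P.2.2 hc).deriv

lemma pt3_fun (hf : ContDiff ℝ (⊤ : ℕ∞) f) : pt3 f = D et f :=
  funext fun P => pt3_eq (hf.differentiable (by simp)) P

lemma px3_fun (hf : ContDiff ℝ (⊤ : ℕ∞) f) : px3 f = D ex f :=
  funext fun P => px3_eq (hf.differentiable (by simp)) P

lemma py3_fun (hf : ContDiff ℝ (⊤ : ℕ∞) f) : py3 f = D ey f :=
  funext fun P => py3_eq (hf.differentiable (by simp)) P

lemma J3_eq (hf : ContDiff ℝ (⊤ : ℕ∞) f) (hg : ContDiff ℝ (⊤ : ℕ∞) g) (P : ℝ × ℝ × ℝ) :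
    J3 f g P = Jb f g P := by
  have hfd := hf.differentiable (by simp)
  have hgd := hg.differentiable (by simp)
  simp only [J3, Jb_apply, px3_eq hfd, py3_eq hfd, px3_eq hgd, py3_eq hgd]

lemma lap3_eq (hf : ContDiff ℝ (⊤ : ℕ∞) f) (P : ℝ × ℝ × ℝ) : lap3 f P = Lb f P := by
  simp only [lap3, Lb, px3_fun hf, py3_fun hf,
    px3_eq (diff_D ex hf), py3_eq (diff_D ey hf)]

lemma lap3_fun (hf : ContDiff ℝ (⊤ : ℕ∞) f) : lap3 f = Lb f :=
  funext fun P => lap3_eq hf P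

lemma px3_neg (g : ℝ × ℝ × ℝ → ℝ) (P : ℝ × ℝ × ℝ) :
    px3 (fun Q => -(g Q)) P = -(px3 g P) := by
  simp only [px3]; exact deriv.neg

lemma py3_neg (g : ℝ × ℝ × ℝ → ℝ) (P : ℝ × ℝ × ℝ) :
    py3 (fun Q => -(g Q)) P = -(py3 g P) := by
  simp only [py3]; exact deriv.neg

lemma lap3_neg (g : ℝ × ℝ × ℝ → ℝ) (P : ℝ × ℝ × ℝ) :
    lap3 (fun Q => -(g Q)) P = -(lap3 g P) := by
  have hx : px3 (fun Q => -(g Q)) = fun Q => -(px3 g Q) := funext fun Q => px3_neg g Q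
  have hy : py3 (fun Q => -(g Q)) = fun Q => -(py3 g Q) := funext fun Q => py3_neg g Q
  simp only [lap3, hx, hy, px3_neg, py3_neg]; ring

end IMHDaux

open IMHDaux

theorem imhd_backlund_transformation
    (u v psi1 psi2 f1 f2 : ℝ × ℝ × ℝ → ℝ)
    (hu : ContDiff ℝ (⊤ : ℕ∞) u) (hv : ContDiff ℝ (⊤ : ℕ∞) v)
    (hpsi1 : ContDiff ℝ (⊤ : ℕ∞) psi1) (hpsi2 : ContDiff ℝ (⊤ : ℕ∞) psi2)
    (hf1s : ContDiff ℝ (⊤ : ℕ∞) f1) (hf2s : ContDiff ℝ (⊤ : ℕ∞) f2)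
    (hG1 : ∀ P, G1 u v P = 0) (hG2 : ∀ P, G2 u v P = 0)
    (hb1 : ∀ P, pt3 psi1 P = J3 u psi1 P + f1 P)
    (hb2 : ∀ P, (0 : ℝ) = J3 v psi1 P + f2 P)
    (hb3 : ∀ P, pt3 psi2 P = J3 u psi2 P + J3 (lap3 v) psi1 P + lap3 f2 P)
    (hb4 : ∀ P, (0 : ℝ) = J3 v psi2 P + J3 (lap3 u) psi1 P + lap3 f1 P) :
    ((∀ P, lap3 (fun Q => pt3 psi1 Q - J3 u psi1 Q) P + J3 v psi2 P
      + J3 (lap3 u) psi1 P = 0) ∧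
    (∀ P, -lap3 (fun Q => J3 v psi1 Q) P - pt3 psi2 P + J3 u psi2 P
      + J3 (lap3 v) psi1 P = 0)) ∧
    ((∀ P, pt3 (lap3 f1) P - J3 f1 (lap3 u) P - J3 u (lap3 f1) P
      + J3 f2 (lap3 v) P + J3 v (lap3 f2) P = 0) ∧
    (∀ P, pt3 f2 P - J3 f1 v P - J3 u f2 P = 0)) := by
  have hvd := hv.differentiable (by simp)
  have hp1d := hpsi1.differentiable (by simp)
  have hp2d := hpsi2.differentiable (by simp)
  have hf1d := hf1s.differentiable (by simp)
  have hf2d := hf2s.differentiable (by simp)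
  have sLu : ContDiff ℝ (⊤ : ℕ∞) (Lb u) := contDiff_Lb hu
  have sLv : ContDiff ℝ (⊤ : ℕ∞) (Lb v) := contDiff_Lb hv
  have sLf1 : ContDiff ℝ (⊤ : ℕ∞) (Lb f1) := contDiff_Lb hf1s
  have sLf2 : ContDiff ℝ (⊤ : ℕ∞) (Lb f2) := contDiff_Lb hf2s
  have lapu : lap3 u = Lb u := lap3_fun hu
  have lapv : lap3 v = Lb v := lap3_fun hv
  have lapf1 : lap3 f1 = Lb f1 := lap3_fun hf1s
  have lapf2 : lap3 f2 = Lb f2 := lap3_fun hf2s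
  have sJup1 : ContDiff ℝ (⊤ : ℕ∞) (Jb u psi1) := contDiff_Jb hu hpsi1
  have sJup2 : ContDiff ℝ (⊤ : ℕ∞) (Jb u psi2) := contDiff_Jb hu hpsi2
  have sJvp1 : ContDiff ℝ (⊤ : ℕ∞) (Jb v psi1) := contDiff_Jb hv hpsi1
  have sJvp2 : ContDiff ℝ (⊤ : ℕ∞) (Jb v psi2) := contDiff_Jb hv hpsi2
  have sJLup1 : ContDiff ℝ (⊤ : ℕ∞) (Jb (Lb u) psi1) := contDiff_Jb sLu hpsi1
  have sJLvp1 : ContDiff ℝ (⊤ : ℕ∞) (Jb (Lb v) psi1) := contDiff_Jb sLv hpsi1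
  have sJuLu : ContDiff ℝ (⊤ : ℕ∞) (Jb u (Lb u)) := contDiff_Jb hu sLu
  have sJvLv : ContDiff ℝ (⊤ : ℕ∞) (Jb v (Lb v)) := contDiff_Jb hv sLv
  -- hypotheses in bracket form
  have E1 : D et psi1 = fun Q => Jb u psi1 Q + f1 Q := funext fun Q => by
    rw [← pt3_eq hp1d Q, hb1 Q, J3_eq hu hpsi1 Q]
  have E2 : f2 = fun Q => -(Jb v psi1 Q) := funext fun Q => by
    have h := hb2 Q
    have hJ := J3_eq hv hpsi1 Q
    linarith
  have E3 : D et psi2 = fun Q => Jb u psi2 Q + Jb (Lb v) psi1 Q + Lb f2 Q :=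
    funext fun Q => by
      rw [← pt3_eq hp2d Q, hb3 Q, lapv, lapf2, J3_eq hu hpsi2 Q, J3_eq sLv hpsi1 Q]
  have E4 : Lb f1 = fun Q => -(Jb v psi2 Q) - Jb (Lb u) psi1 Q := funext fun Q => by
    have h := hb4 Q
    have j1 := J3_eq hv hpsi2 Q
    have j2 : J3 (lap3 u) psi1 Q = Jb (Lb u) psi1 Q := by
      rw [lapu]; exact J3_eq sLu hpsi1 Q
    have j3 : lap3 f1 Q = Lb f1 Q := lap3_eq hf1s Q
    linarith
  have EG1 : D et (Lb u) = fun Q => Jb u (Lb u) Q - Jb v (Lb v) Q := funext fun Q => by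
    have h := hG1 Q
    simp only [G1] at h
    have a1 : pt3 (lap3 u) Q = D et (Lb u) Q := by
      rw [lapu]; exact pt3_eq (sLu.differentiable (by simp)) Q
    have a2 : J3 u (lap3 u) Q = Jb u (Lb u) Q := by rw [lapu]; exact J3_eq hu sLu Q
    have a3 : J3 v (lap3 v) Q = Jb v (Lb v) Q := by rw [lapv]; exact J3_eq hv sLv Q
    linarith
  have EG2 : D et v = Jb u v := funext fun Q => by
    have h := hG2 Q
    simp only [G2] at h
    rw [← pt3_eq hvd Q, ← J3_eq hu hv Q]
    linarith
  refine ⟨⟨fun P => ?_, fun P => ?_⟩, fun P => ?_, fun P => ?_⟩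
  · -- cotangent 1
    have eA : (fun Q => pt3 psi1 Q - J3 u psi1 Q) = f1 := funext fun Q => by
      linarith [hb1 Q]
    rw [eA]
    linarith [hb4 P]
  · -- cotangent 2
    have eB : (fun Q => J3 v psi1 Q) = fun Q => -(f2 Q) := funext fun Q => by
      linarith [hb2 Q]
    rw [eB, lap3_neg f2 P]
    linarith [hb3 P]
  · -- tangent 1
    have c1 : pt3 (lap3 f1) P = D et (Lb f1) P := by
      rw [lapf1]; exact pt3_eq (sLf1.differentiable (by simp)) P
    have c2 : J3 f1 (lap3 u) P = Jb f1 (Lb u) P := by rw [lapu]; exact J3_eq hf1s sLu P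
    have c3 : J3 u (lap3 f1) P = Jb u (Lb f1) P := by rw [lapf1]; exact J3_eq hu sLf1 P
    have c4 : J3 f2 (lap3 v) P = Jb f2 (Lb v) P := by rw [lapv]; exact J3_eq hf2s sLv P
    have c5 : J3 v (lap3 f2) P = Jb v (Lb f2) P := by rw [lapf2]; exact J3_eq hv sLf2 P
    have h2 : D et (Lb f1) P = -(D et (Jb v psi2) P) - D et (Jb (Lb u) psi1) P := by
      rw [E4, D_sub ((sJvp2.differentiable (by simp)).fun_neg) (sJLup1.differentiable (by simp)),
        D_neg]
    have h3 : D et (Jb v psi2) P = Jb (D et v) psi2 P + Jb v (D et psi2) P :=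
      D_Jb hv hpsi2 et P
    have h4 : Jb (D et v) psi2 P = Jb (Jb u v) psi2 P := by rw [EG2]
    have h5 : Jb v (D et psi2) P
        = Jb v (Jb u psi2) P + Jb v (Jb (Lb v) psi1) P + Jb v (Lb f2) P := by
      rw [E3, Jb_add_right ((sJup2.add sJLvp1).differentiable (by simp))
          (sLf2.differentiable (by simp)) v P,
        Jb_add_right (sJup2.differentiable (by simp)) (sJLvp1.differentiable (by simp)) v P]
    have h6 : D et (Jb (Lb u) psi1) P
        = Jb (D et (Lb u)) psi1 P + Jb (Lb u) (D et psi1) P := D_Jb sLu hpsi1 et P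
    have h7 : Jb (D et (Lb u)) psi1 P
        = Jb (Jb u (Lb u)) psi1 P - Jb (Jb v (Lb v)) psi1 P := by
      rw [EG1]
      exact Jb_sub_left (sJuLu.differentiable (by simp)) (sJvLv.differentiable (by simp)) psi1 P
    have h8 : Jb (Lb u) (D et psi1) P = Jb (Lb u) (Jb u psi1) P + Jb (Lb u) f1 P := by
      rw [E1]
      exact Jb_add_right (sJup1.differentiable (by simp)) hf1d (Lb u) P
    have h12 : Jb u (Lb f1) P = -(Jb u (Jb v psi2) P) - Jb u (Jb (Lb u) psi1) P := by
      rw [E4]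
      exact Jb_negsub_right (sJvp2.differentiable (by simp)) (sJLup1.differentiable (by simp)) u P
    have h14 : Jb f2 (Lb v) P = -(Jb (Jb v psi1) (Lb v) P) := by
      rw [E2]
      exact Jb_neg_left (Jb v psi1) (Lb v) P
    have s1 := Jb_swap f1 (Lb u) P
    have s2 := Jb_swap (Jb v psi1) (Lb v) P
    have jac1 : Jb u (Jb v psi2) P = Jb (Jb u v) psi2 P + Jb v (Jb u psi2) P :=
      jacobi hu hv hpsi2 P
    have jac2 : Jb u (Jb (Lb u) psi1) P
        = Jb (Jb u (Lb u)) psi1 P + Jb (Lb u) (Jb u psi1) P := jacobi hu sLu hpsi1 P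
    have jac3 : Jb v (Jb (Lb v) psi1) P
        = Jb (Jb v (Lb v)) psi1 P + Jb (Lb v) (Jb v psi1) P := jacobi hv sLv hpsi1 P
    linarith
  · -- tangent 2
    have g1 : pt3 f2 P = D et f2 P := pt3_eq hf2d P
    have g2 : D et f2 P = -(D et (Jb v psi1) P) := by
      rw [E2]; exact D_neg et (Jb v psi1) P
    have g3 : D et (Jb v psi1) P = Jb (D et v) psi1 P + Jb v (D et psi1) P :=
      D_Jb hv hpsi1 et P
    have g4 : Jb (D et v) psi1 P = Jb (Jb u v) psi1 P := by rw [EG2]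
    have g5 : Jb v (D et psi1) P = Jb v (Jb u psi1) P + Jb v f1 P := by
      rw [E1]; exact Jb_add_right (sJup1.differentiable (by simp)) hf1d v P
    have g6 : J3 f1 v P = Jb f1 v P := J3_eq hf1s hv P
    have g7 := Jb_swap f1 v P
    have g8 : J3 u f2 P = Jb u f2 P := J3_eq hu hf2s P
    have g9 : Jb u f2 P = -(Jb u (Jb v psi1) P) := by
      rw [E2]; exact Jb_neg_right u (Jb v psi1) P
    have jac : Jb u (Jb v psi1) P = Jb (Jb u v) psi1 P + Jb v (Jb u psi1) P :=
      jacobi hu hv hpsi1 P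
    linarith
end
end
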